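/- arXiv:2601.08678 — 3 statements merged into one kernel-verified Lean document; each statement's English description precedes it below -/
import Mathlib

section
/- Let q be an odd prime power and let G = PGL_2(q), the projective general linear group of degree 2 over the field with q elements. If H and K are maximal subgroups of G such that H is isomorphic to the dihedral group of order 2(q−1) and K is isomorphic to the dihedral group of order 2(q+1), then H ∩ K is non-trivial. -/
/-- The projective general linear group `PGL₂(F)`. -/
abbrev PGL2 (F : Type*) [Field F] :=
  Matrix.GeneralLinearGroup (Fin 2) F ⧸
    Subgroup.center (Matrix.GeneralLinearGroup (Fin 2) F)

/-!
Being dihedral of twice an even order, `H` and `K` contain central involutions `z` and `w`,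
and by maximality the centralizer of `z` is `H` or `G`, that of `w` is `K` or `G`.
If `w` is central in `G` and `w ∉ H`, then `G = H⟨w⟩` has order at most `2|H|`, while
`H ∩ K = 1` gives `|H||K| ≤ |G|`, so `|K| ≤ 2`. Otherwise `C(z) = H` and `C(w) = K`, and
`z, w` generate a dihedral group with rotation `zw`. If `zw` has even order `2k`, then
`(zw)^k` is a non-trivial element commuting with `z` and `w`, hence lies in `H ∩ K`; if the
order is odd, `z` and `w` are conjugate, so `|H| = |K|`.
-/

section Involutions

variable {G : Type*} [Group G] {x a z w : G}

lemma conj_pow_eq_inv_of_conj_eq_inv (h : x * a * x⁻¹ = a⁻¹) (k : ℕ) :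
    x * a ^ k * x⁻¹ = (a ^ k)⁻¹ := by
  rw [← MulAut.conj_apply, map_pow, MulAut.conj_apply, h, inv_pow]

lemma commute_of_conj_eq_inv (h : x * a * x⁻¹ = a⁻¹) (ha : a⁻¹ = a) : Commute x a :=
  mul_inv_eq_iff_eq_mul.mp (h.trans ha)

lemma inv_eq_self_of_sq_eq_one (hx : x ^ 2 = 1) : x⁻¹ = x :=
  inv_eq_of_mul_eq_one_right (sq x ▸ hx)

variable (hz : z ^ 2 = 1) (hw : w ^ 2 = 1)
include hz hw

lemma conj_mul_eq_inv_left : z * (z * w) * z⁻¹ = (z * w)⁻¹ := by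
  rw [mul_inv_rev, inv_eq_self_of_sq_eq_one hz, inv_eq_self_of_sq_eq_one hw,
    ← mul_assoc, ← sq, hz, one_mul]

lemma conj_mul_eq_inv_right : w * (z * w) * w⁻¹ = (z * w)⁻¹ := by
  rw [mul_inv_rev, inv_eq_self_of_sq_eq_one hz, inv_eq_self_of_sq_eq_one hw,
    mul_assoc, mul_assoc, ← sq, hw, mul_one]

lemma exists_ne_one_commute_of_even_orderOf_mul [Finite G] (h : Even (orderOf (z * w))) :
    ∃ t ≠ (1 : G), Commute z t ∧ Commute w t := by
  obtain ⟨k, hk⟩ := h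
  have hpos := orderOf_pos (z * w)
  have hinv : ((z * w) ^ k)⁻¹ = (z * w) ^ k :=
    inv_eq_of_mul_eq_one_right (by rw [← pow_add, ← hk, pow_orderOf_eq_one])
  exact ⟨(z * w) ^ k, pow_ne_one_of_lt_orderOf (by omega) (by omega),
    commute_of_conj_eq_inv (conj_pow_eq_inv_of_conj_eq_inv (conj_mul_eq_inv_left hz hw) k) hinv,
    commute_of_conj_eq_inv (conj_pow_eq_inv_of_conj_eq_inv (conj_mul_eq_inv_right hz hw) k) hinv⟩

lemma exists_conj_eq_of_odd_orderOf_mul (h : Odd (orderOf (z * w))) :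
    ∃ b : G, b * z * b⁻¹ = w := by
  obtain ⟨k, hk⟩ := h
  set b := (z * w) ^ k
  have hb : b * b = (z * w)⁻¹ := by
    rw [← pow_add, eq_inv_iff_mul_eq_one, ← pow_succ, ← two_mul, ← hk, pow_orderOf_eq_one]
  have hzb : z * b⁻¹ * z⁻¹ = b := by
    rw [← inv_inj, mul_inv_rev, mul_inv_rev, inv_inv, inv_inv, ← mul_assoc,
      conj_pow_eq_inv_of_conj_eq_inv (conj_mul_eq_inv_left hz hw) k]
  refine ⟨b, ?_⟩
  calc b * z * b⁻¹ = b * (z * b⁻¹ * z⁻¹) * z := by group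
    _ = b * b * z := by rw [hzb]
    _ = w := by rw [hb, mul_inv_rev, inv_mul_cancel_right, inv_eq_self_of_sq_eq_one hw]

end Involutions

open Subgroup

namespace DihedralGroup

variable {n : ℕ}

lemma r_mem_center {i : ZMod n} (hi : i + i = 0) : r i ∈ center (DihedralGroup n) := by
  have hneg : -i = i := neg_eq_of_add_eq_zero_left hi
  rw [mem_center_iff]
  rintro (j | j)
  · simp only [r_mul_r, add_comm]
  · simp only [r_mul_sr, sr_mul_r, sub_eq_add_neg, hneg]

lemma exists_orderOf_eq_two_mem_center (hn : Even n) (hn0 : n ≠ 0) :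
    ∃ c : DihedralGroup n, orderOf c = 2 ∧ c ∈ center (DihedralGroup n) := by
  obtain ⟨k, rfl⟩ := hn
  have hk : (k : ZMod (k + k)) + k = 0 := by rw [← Nat.cast_add, ZMod.natCast_self]
  have hk0 : (k : ZMod (k + k)) ≠ 0 := by
    rw [Ne, ZMod.natCast_eq_zero_iff]
    exact fun h => by have := Nat.le_of_dvd (by omega) h; omega
  refine ⟨r k, orderOf_eq_prime ?_ ?_, r_mem_center hk⟩
  · rw [sq, r_mul_r, hk, r_zero]
  · rw [← r_zero]; exact fun h => hk0 (r.inj h)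

end DihedralGroup

namespace Subgroup

variable {G : Type*} [Group G] {H K : Subgroup G} {z w : G}

lemma card_centralizer_conj (b z : G) :
    Nat.card (centralizer {b * z * b⁻¹}) = Nat.card (centralizer {z}) := by
  rw [nat_card_centralizer_nat_card_stabilizer, nat_card_centralizer_nat_card_stabilizer,
    ← ConjAct.toConjAct_smul, MulAction.stabilizer_smul_eq_stabilizer_map_conj,
    card_map_of_injective (MulAut.conj _).injective]

lemma inf_ne_bot_of_mem {x : G} (hxH : x ∈ H) (hxK : x ∈ K) (hx : x ≠ 1) : H ⊓ K ≠ ⊥ :=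
  fun hbot => hx (mem_bot.mp (hbot ▸ mem_inf.mpr ⟨hxH, hxK⟩))

lemma exists_orderOf_eq_two_le_centralizer {n : ℕ} (e : H ≃* DihedralGroup n) (hn : Even n)
    (hn0 : n ≠ 0) : ∃ z ∈ H, orderOf z = 2 ∧ H ≤ centralizer {z} := by
  obtain ⟨c, hc2, hc⟩ := DihedralGroup.exists_orderOf_eq_two_mem_center hn hn0
  refine ⟨e.symm c, (e.symm c).2, by rw [orderOf_coe, MulEquiv.orderOf_eq, hc2], fun h hh => ?_⟩
  rw [mem_centralizer_singleton_iff]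
  simpa using congrArg (fun y => (e.symm y : G)) (mem_center_iff.mp hc (e ⟨h, hh⟩))

variable [Finite G]

lemma card_mul_card_le_of_inf_eq_bot (h : H ⊓ K = ⊥) :
    Nat.card H * Nat.card K ≤ Nat.card G := by
  have hrel : K.relIndex H = Nat.card H := by
    rw [← inf_relIndex_left, h, relIndex_bot_left]
  have hle : K.relIndex H ≤ K.index := K.relIndex_top_right ▸
    relIndex_le_of_le_right le_top (K.relIndex_top_right ▸ index_ne_zero_of_finite)
  rw [← K.index_mul_card, ← hrel]
  exact Nat.mul_le_mul_right _ hle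

lemma card_le_orderOf_mul_card_of_isCoatom (hH : IsCoatom H) (hw : w ∈ center G) (hwH : w ∉ H) :
    Nat.card G ≤ orderOf w * Nat.card H := by
  have : (zpowers w).Normal := ⟨fun x hx g => by
    rwa [mem_center_iff.mp (zpowers_le.mpr hw hx) g, mul_inv_cancel_right]⟩
  have hsup : H ⊔ zpowers w = ⊤ :=
    hH.2 _ (lt_of_le_of_ne le_sup_left fun h => hwH (h ▸ mem_sup_right (mem_zpowers w)))
  have hindex : (zpowers w).index ≤ Nat.card H := by
    rw [← relIndex_top_right, ← hsup, relIndex_sup_right]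
    exact Nat.le_of_dvd Nat.card_pos (relIndex_dvd_card _ _)
  rw [← (zpowers w).index_mul_card, Nat.card_zpowers, mul_comm]
  exact Nat.mul_le_mul_left _ hindex

lemma inf_ne_bot_of_mem_center (hH : IsCoatom H) (hw : w ∈ center G) (hwK : w ∈ K)
    (hw2 : orderOf w = 2) (hK : 2 < Nat.card K) : H ⊓ K ≠ ⊥ := by
  by_cases hwH : w ∈ H
  · exact inf_ne_bot_of_mem hwH hwK (by rintro rfl; simp at hw2)
  · intro hbot
    have hG := card_le_orderOf_mul_card_of_isCoatom hH hw hwH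
    have hHK := card_mul_card_le_of_inf_eq_bot hbot
    have : 0 < Nat.card H := Nat.card_pos
    rw [hw2] at hG
    nlinarith

lemma inf_ne_bot_of_centralizer_eq (hz : z ^ 2 = 1) (hw : w ^ 2 = 1)
    (hzH : centralizer {z} = H) (hwK : centralizer {w} = K) (hHK : Nat.card H ≠ Nat.card K) :
    H ⊓ K ≠ ⊥ := by
  rcases Nat.even_or_odd (orderOf (z * w)) with h | h
  · obtain ⟨t, ht1, hzt, hwt⟩ := exists_ne_one_commute_of_even_orderOf_mul hz hw h
    have htH : t ∈ H := hzH ▸ mem_centralizer_singleton_iff.mpr hzt.symm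
    have htK : t ∈ K := hwK ▸ mem_centralizer_singleton_iff.mpr hwt.symm
    exact inf_ne_bot_of_mem htH htK ht1
  · obtain ⟨b, rfl⟩ := exists_conj_eq_of_odd_orderOf_mul hz hw h
    exact absurd (hzH ▸ hwK ▸ card_centralizer_conj b z).symm hHK

lemma inf_ne_bot_of_le_centralizer (hH : IsCoatom H) (hK : IsCoatom K) (hzH : z ∈ H)
    (hwK : w ∈ K) (hz : orderOf z = 2) (hw : orderOf w = 2) (hHz : H ≤ centralizer {z})
    (hKw : K ≤ centralizer {w}) (hH2 : 2 < Nat.card H) (hK2 : 2 < Nat.card K)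
    (hHK : Nat.card H ≠ Nat.card K) : H ⊓ K ≠ ⊥ := by
  rcases hH.le_iff.mp hHz with hzc | hzc
  · rw [centralizer_eq_top_iff_subset, Set.singleton_subset_iff] at hzc
    exact inf_comm H K ▸ inf_ne_bot_of_mem_center hK hzc hzH hz hH2
  rcases hK.le_iff.mp hKw with hwc | hwc
  · rw [centralizer_eq_top_iff_subset, Set.singleton_subset_iff] at hwc
    exact inf_ne_bot_of_mem_center hH hwc hwK hw hK2
  exact inf_ne_bot_of_centralizer_eq (hz ▸ pow_orderOf_eq_one z) (hw ▸ pow_orderOf_eq_one w)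
    hzc hwc hHK

theorem inf_ne_bot_of_mulEquiv_dihedralGroup (hH : IsCoatom H) (hK : IsCoatom K) {m n : ℕ}
    (hm : Even m) (hn : Even n) (hmn : m ≠ n)
    (eH : H ≃* DihedralGroup m) (eK : K ≃* DihedralGroup n) : H ⊓ K ≠ ⊥ := by
  have hcardH : Nat.card H = 2 * m := by rw [Nat.card_congr eH.toEquiv, DihedralGroup.nat_card]
  have hcardK : Nat.card K = 2 * n := by rw [Nat.card_congr eK.toEquiv, DihedralGroup.nat_card]
  have hm0 : m ≠ 0 := by have : 0 < Nat.card H := Nat.card_pos; omega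
  have hn0 : n ≠ 0 := by have : 0 < Nat.card K := Nat.card_pos; omega
  obtain ⟨z, hzH, hz, hHz⟩ := exists_orderOf_eq_two_le_centralizer eH hm hm0
  obtain ⟨w, hwK, hw, hKw⟩ := exists_orderOf_eq_two_le_centralizer eK hn hn0
  obtain ⟨k, rfl⟩ := hm
  obtain ⟨l, rfl⟩ := hn
  exact inf_ne_bot_of_le_centralizer hH hK hzH hwK hz hw hHz hKw (by omega) (by omega) (by omega)

end Subgroup

theorem stmt_5_general (q : ℕ) (hodd : Odd q)
    (F : Type*) [Field F] [Fintype F]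
    (H K : Subgroup (PGL2 F)) (hH : IsCoatom H) (hK : IsCoatom K)
    (hHdih : Nonempty (H ≃* DihedralGroup (q - 1)))
    (hKdih : Nonempty (K ≃* DihedralGroup (q + 1))) :
    H ⊓ K ≠ ⊥ := by
  obtain ⟨eH⟩ := hHdih
  obtain ⟨eK⟩ := hKdih
  exact inf_ne_bot_of_mulEquiv_dihedralGroup hH hK (hodd.tsub_odd odd_one) hodd.add_one
    (by omega) eH eK

/-- **Proposition 2.7.** In `PGL₂(q)` with `q` odd, every maximal subgroup isomorphic to
`D_{2(q-1)}` meets every maximal subgroup isomorphic to `D_{2(q+1)}` non-trivially. -/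
theorem stmt_5 (q : ℕ) (hodd : Odd q)
    (F : Type*) [Field F] [Fintype F] (hq : Fintype.card F = q)
    (H K : Subgroup (PGL2 F)) (hH : IsCoatom H) (hK : IsCoatom K)
    (hHdih : Nonempty (H ≃* DihedralGroup (q - 1)))
    (hKdih : Nonempty (K ≃* DihedralGroup (q + 1))) :
    H ⊓ K ≠ ⊥ :=
  stmt_5_general q hodd F H K hH hK hHdih hKdih
end

section
/- Let D = (P,𝓑) be a symmetric 2-(v,k,λ) design with λ > 1 and let G be a block-transitive automorphism group of D. Let B ∈ 𝓑 and suppose that every element of G_B that induces a non-identity permutation of B fixes at most λ points of B. Then either G_B acts faithfully on B (i.e., G_{(B)} = 1), or every non-identity element g of the pointwise stabilizer G_{(B)} has fixed-point set on P exactly equal to B. If the stronger hypothesis holds that every element of G_B inducing a non-identity permutation of B fixes at most λ − 1 points of B, then G_B acts faithfully on B. -/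
open scoped Pointwise

/-- A group action is primitive if it is transitive and every block is trivial
(this is the usual notion of a primitive permutation group). -/
def IsPrimitiveAction (G X : Type*) [Group G] [MulAction G X] : Prop :=
  MulAction.IsPretransitive G X ∧
    ∀ B : Set X, MulAction.IsBlock G B → B.Subsingleton ∨ B = Set.univ

variable {P : Type*} [Fintype P] [DecidableEq P]

/-- `𝓑` is the block set of a (non-trivial) 2-design with parameters `(v, k, lam)`
on the point set `P`. -/
structure IsDesign (𝓑 : Finset (Finset P)) (v k lam : ℕ) : Prop where
  card_points : Fintype.card P = v
  blocks_card : ∀ B ∈ 𝓑, B.card = k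
  two_lt_k : 2 < k
  k_lt_v : k < v - 1
  lam_pos : 0 < lam
  pair_blocks : ∀ x y : P, x ≠ y → (𝓑.filter fun B => x ∈ B ∧ y ∈ B).card = lam

/-- `G` is an automorphism group of the design with block set `𝓑`:
every element of `G` maps blocks to blocks. -/
def IsAutGroup (G : Subgroup (Equiv.Perm P)) (𝓑 : Finset (Finset P)) : Prop :=
  ∀ g ∈ G, ∀ B ∈ 𝓑, g • B ∈ 𝓑

/-- `G` acts transitively on the flags of the design with block set `𝓑`. -/
def IsFlagTransitive (G : Subgroup (Equiv.Perm P)) (𝓑 : Finset (Finset P)) : Prop :=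
  ∀ B₁ ∈ 𝓑, ∀ B₂ ∈ 𝓑, ∀ x₁ ∈ B₁, ∀ x₂ ∈ B₂, ∃ g ∈ G, g • x₁ = x₂ ∧ g • B₁ = B₂

/-- `G` acts transitively on the blocks of the design with block set `𝓑`. -/
def IsBlockTransitive (G : Subgroup (Equiv.Perm P)) (𝓑 : Finset (Finset P)) : Prop :=
  ∀ B₁ ∈ 𝓑, ∀ B₂ ∈ 𝓑, ∃ g ∈ G, g • B₁ = B₂

/-!
The incidence matrix `M` of a symmetric design satisfies `M Mᵀ = (k - λ) I + λ J`, which is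
invertible since `λ < k`. Hence `Mᵀ M = (k - λ) I + λ J` as well, i.e. two distinct blocks meet in
exactly `λ` points, and for an automorphism `σ` the permutation matrices of `σ` on points and on
blocks are conjugate by `M`; comparing traces, `σ` fixes as many blocks as points.

Let `1 ≠ g ∈ G_(B)`. If `g` fixed a point `x ∉ B`, pick a point `z` moved by `g` and a block `C`
through `x` and `z`. In `C`, `g` fixes `x` and the `λ` points of `B ∩ C`. If `g` stabilizes `C`
this contradicts the hypothesis, transported from `B` to `C` by block-transitivity; otherwise all
fixed points of `g` in `C` lie in `C ∩ g C`, which has only `λ` points. So `Fix(g) = B`. Then `g`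
fixes `k ≥ 3` blocks, in particular a block `C ≠ B`; it moves a point of `C` but fixes the `λ`
points of `B ∩ C`, which contradicts the bound `λ - 1`.
-/

open Finset

namespace IsDesign

variable {𝓑 : Finset (Finset P)} {v k lam : ℕ}

theorem card_filter_mem_mul (hD : IsDesign 𝓑 v k lam) (x : P) :
    #{C ∈ 𝓑 | x ∈ C} * (k - 1) = lam * (v - 1) := by
  have h := card_mul_eq_card_mul (s := univ.erase x) (t := {C ∈ 𝓑 | x ∈ C}) (· ∈ ·)
    (m := lam) (n := k - 1)
    (fun y hy => by
      rw [bipartiteAbove, filter_filter]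
      exact hD.pair_blocks x y (ne_of_mem_erase hy).symm)
    (fun C hCx => by
      obtain ⟨hC, hxC⟩ := mem_filter.mp hCx
      rw [bipartiteBelow, ← hD.blocks_card C hC, ← card_erase_of_mem hxC]
      congr 1
      ext y
      simp [and_comm])
  rw [card_erase_of_mem (mem_univ x), card_univ, hD.card_points] at h
  rw [← h, mul_comm]

theorem card_filter_mem (hD : IsDesign 𝓑 v k lam) (hsym : #𝓑 = v) (x : P) :
    #{C ∈ 𝓑 | x ∈ C} = k := by
  have hk : 0 < k - 1 := by have := hD.two_lt_k; omega
  have hconst : ∀ y, #{C ∈ 𝓑 | y ∈ C} = #{C ∈ 𝓑 | x ∈ C} := fun y =>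
    Nat.eq_of_mul_eq_mul_right hk ((hD.card_filter_mem_mul y).trans (hD.card_filter_mem_mul x).symm)
  have h := card_mul_eq_card_mul (s := univ) (t := 𝓑) (· ∈ ·)
    (fun y _ => hconst y) (fun C hC => by simpa [bipartiteBelow] using hD.blocks_card C hC)
  rw [card_univ, hD.card_points, hsym] at h
  have hv : 0 < v := by have := hD.k_lt_v; omega
  exact Nat.eq_of_mul_eq_mul_left hv h

theorem lam_lt_k (hD : IsDesign 𝓑 v k lam) (hsym : #𝓑 = v) : lam < k := by
  obtain ⟨x⟩ : Nonempty P := by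
    rw [← Fintype.card_pos_iff, hD.card_points]; have := hD.k_lt_v; omega
  have h := hD.card_filter_mem_mul x
  rw [hD.card_filter_mem hsym x] at h
  have := hD.two_lt_k
  have := hD.k_lt_v
  by_contra! hle
  have : k * (k - 1) < lam * (v - 1) :=
    calc k * (k - 1) < k * (v - 1) := by gcongr <;> omega
      _ ≤ lam * (v - 1) := by gcongr
  omega

end IsDesign

open Matrix

section AllOnes

variable {n R : Type*} [Fintype n]

theorem ones_mul_ones [NonAssocSemiring R] :
    (of fun _ _ => 1 : Matrix n n R) * of (fun _ _ => 1) =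
      (Fintype.card n : R) • of fun _ _ => 1 := by
  ext i j
  simp [mul_apply]

theorem smul_one_add_smul_ones_mul [DecidableEq n] [CommRing R] (a b : R) :
    (a • 1 + b • of fun _ _ => 1 : Matrix n n R) *
        ((a + b * Fintype.card n) • 1 - b • of fun _ _ => 1)
      = (a * (a + b * Fintype.card n)) • 1 := by
  simp only [Matrix.add_mul, Matrix.mul_sub, Matrix.smul_mul, Matrix.mul_smul, Matrix.one_mul,
    Matrix.mul_one, ones_mul_ones, smul_smul]
  module

end AllOnes

section Incidence

variable {α : Type*} [DecidableEq α]

def incidenceMatrix (𝓑 : Finset (Finset α)) : Matrix α 𝓑 ℚ :=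
  of fun x C => if x ∈ (C : Finset α) then 1 else 0

variable (𝓑 : Finset (Finset α))

theorem incidenceMatrix_mul_transpose_apply (x y : α) :
    (incidenceMatrix 𝓑 * (incidenceMatrix 𝓑)ᵀ) x y = #{C ∈ 𝓑 | x ∈ C ∧ y ∈ C} := by
  simp only [incidenceMatrix, mul_apply, transpose_apply, of_apply, mul_ite, mul_one, mul_zero,
    ← ite_and]
  rw [sum_coe_sort 𝓑 (fun C => if y ∈ C ∧ x ∈ C then (1 : ℚ) else 0), sum_boole]
  simp only [and_comm]

theorem incidenceMatrix_mul_ones :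
    incidenceMatrix 𝓑 * (of fun _ _ => 1 : Matrix 𝓑 𝓑 ℚ) =
      of fun x _ => (#{C ∈ 𝓑 | x ∈ C} : ℚ) := by
  ext x C
  simp only [incidenceMatrix, mul_apply, of_apply, mul_one]
  rw [sum_coe_sort 𝓑 (fun C => if x ∈ C then (1 : ℚ) else 0), sum_boole]

variable [Fintype α]

theorem transpose_mul_incidenceMatrix_apply (C D : 𝓑) :
    ((incidenceMatrix 𝓑)ᵀ * incidenceMatrix 𝓑) C D = #((C : Finset α) ∩ D) := by
  simp only [incidenceMatrix, mul_apply, transpose_apply, of_apply, mul_ite, mul_one, mul_zero,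
    ← ite_and, sum_boole]
  congr 2
  ext x
  simp [and_comm]

theorem ones_mul_incidenceMatrix :
    (of fun _ _ => 1 : Matrix α α ℚ) * incidenceMatrix 𝓑 =
      of fun _ (C : 𝓑) => (#(C : Finset α) : ℚ) := by
  ext x C
  simp [incidenceMatrix, mul_apply]

end Incidence

theorem Matrix.trace_eq_of_mul_eq_mul {m n R : Type*} [Fintype m] [Fintype n] [DecidableEq m]
    [DecidableEq n] [CommSemiring R] {A : Matrix m m R} {B : Matrix n n R} {M : Matrix m n R} {L : Matrix n m R}
    (hLM : L * M = 1) (hML : M * L = 1) (h : A * M = M * B) : trace A = trace B := by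
  have hB : B = L * (A * M) := by rw [h, ← Matrix.mul_assoc, hLM, Matrix.one_mul]
  rw [hB, trace_mul_comm, Matrix.mul_assoc, hML, Matrix.mul_one]

theorem Equiv.Perm.trace_permMatrix {n R : Type*} [Fintype n] [DecidableEq n]
    [AddCommMonoidWithOne R] (σ : Equiv.Perm n) : trace (σ.permMatrix R) = #{i | σ i = i} := by
  rw [trace_permutation, ← Set.ncard_coe_finset]
  congr
  ext
  simp [Function.IsFixedPt]

section BlockPerm

variable {α : Type*} [DecidableEq α] {𝓑 : Finset (Finset α)}

noncomputable def blockPerm (σ : Equiv.Perm α) (hσ : ∀ C ∈ 𝓑, σ • C ∈ 𝓑) : Equiv.Perm 𝓑 :=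
  Equiv.ofBijective (fun C => ⟨σ • (C : Finset α), hσ C C.2⟩)
    (Finite.injective_iff_bijective.mp fun _ _ h =>
      Subtype.ext (MulAction.injective σ (congrArg Subtype.val h)))

theorem coe_blockPerm (σ : Equiv.Perm α) (hσ : ∀ C ∈ 𝓑, σ • C ∈ 𝓑) (C : 𝓑) :
    (blockPerm σ hσ C : Finset α) = σ • (C : Finset α) := rfl

theorem card_filter_blockPerm_eq (σ : Equiv.Perm α) (hσ : ∀ C ∈ 𝓑, σ • C ∈ 𝓑) :
    #{C | blockPerm σ hσ C = C} = #{C ∈ 𝓑 | σ • C = C} := by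
  rw [← card_map (Function.Embedding.subtype _)]
  congr 1
  ext C
  simp [Subtype.ext_iff, coe_blockPerm, and_comm]

variable [Fintype α]

theorem permMatrix_mul_incidenceMatrix (σ : Equiv.Perm α) (hσ : ∀ C ∈ 𝓑, σ • C ∈ 𝓑) :
    σ.permMatrix ℚ * incidenceMatrix 𝓑 = incidenceMatrix 𝓑 * (blockPerm σ hσ).permMatrix ℚ := by
  rw [PEquiv.toMatrix_toPEquiv_mul, PEquiv.mul_toMatrix_toPEquiv]
  ext x C
  have hmem : σ x ∈ (C : Finset α) ↔ x ∈ ((blockPerm σ hσ).symm C : Finset α) := by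
    rw [← smul_mem_smul_finset_iff σ (b := x), ← coe_blockPerm σ hσ,
      Equiv.apply_symm_apply]
    rfl
  simp only [incidenceMatrix, submatrix_apply, of_apply, id, hmem]

end BlockPerm

namespace IsDesign

variable {𝓑 : Finset (Finset P)} {v k lam : ℕ}

theorem incidenceMatrix_mul_transpose (hD : IsDesign 𝓑 v k lam) (hsym : #𝓑 = v) :
    incidenceMatrix 𝓑 * (incidenceMatrix 𝓑)ᵀ =
      ((k : ℚ) - lam) • 1 + (lam : ℚ) • of fun _ _ => 1 := by
  ext x y
  rw [incidenceMatrix_mul_transpose_apply]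
  by_cases hxy : x = y
  · subst hxy
    simp [hD.card_filter_mem hsym]
  · simp [hD.pair_blocks x y hxy, hxy]

theorem exists_inverse_incidenceMatrix (hD : IsDesign 𝓑 v k lam) (hsym : #𝓑 = v) :
    ∃ L : Matrix 𝓑 P ℚ, L * incidenceMatrix 𝓑 = 1 ∧ incidenceMatrix 𝓑 * L = 1 := by
  set t : ℚ := (k - lam) + lam * Fintype.card P
  have hc : ((k : ℚ) - lam) * t ≠ 0 := by
    have : (lam : ℚ) < k := by exact_mod_cast hD.lam_lt_k hsym
    have : 0 < t := by positivity
    positivity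
  set L := (((k : ℚ) - lam) * t)⁻¹ •
    ((incidenceMatrix 𝓑)ᵀ * (t • 1 - (lam : ℚ) • (of fun _ _ => 1 : Matrix P P ℚ)))
  have hML : incidenceMatrix 𝓑 * L = 1 := by
    rw [Matrix.mul_smul, ← Matrix.mul_assoc, hD.incidenceMatrix_mul_transpose hsym,
      smul_one_add_smul_ones_mul, smul_smul, inv_mul_cancel₀ hc, one_smul]
  have e : P ≃ 𝓑 := Fintype.equivOfCardEq (by rw [Fintype.card_coe, hsym, hD.card_points])
  exact ⟨L, (mul_eq_one_comm_of_equiv e).mp hML, hML⟩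

theorem transpose_mul_incidenceMatrix (hD : IsDesign 𝓑 v k lam) (hsym : #𝓑 = v) :
    (incidenceMatrix 𝓑)ᵀ * incidenceMatrix 𝓑 =
      ((k : ℚ) - lam) • 1 + (lam : ℚ) • of fun _ _ => 1 := by
  obtain ⟨L, hLM, -⟩ := hD.exists_inverse_incidenceMatrix hsym
  have hcomm : incidenceMatrix 𝓑 * (incidenceMatrix 𝓑)ᵀ * incidenceMatrix 𝓑 =
      incidenceMatrix 𝓑 * (((k : ℚ) - lam) • 1 + (lam : ℚ) • (of fun _ _ => 1 : Matrix 𝓑 𝓑 ℚ)) := by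
    rw [hD.incidenceMatrix_mul_transpose hsym, Matrix.add_mul, Matrix.mul_add, Matrix.smul_mul,
      Matrix.smul_mul, Matrix.mul_smul, Matrix.mul_smul, Matrix.one_mul, Matrix.mul_one,
      ones_mul_incidenceMatrix, incidenceMatrix_mul_ones]
    congr 2
    ext x C
    simp [hD.blocks_card C C.2, hD.card_filter_mem hsym x]
  calc (incidenceMatrix 𝓑)ᵀ * incidenceMatrix 𝓑
      = L * (incidenceMatrix 𝓑 * (incidenceMatrix 𝓑)ᵀ * incidenceMatrix 𝓑) := by
        rw [Matrix.mul_assoc, ← Matrix.mul_assoc L, hLM, Matrix.one_mul]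
    _ = _ := by rw [hcomm, ← Matrix.mul_assoc, hLM, Matrix.one_mul]

theorem card_inter_eq (hD : IsDesign 𝓑 v k lam) (hsym : #𝓑 = v) {C₁ C₂ : Finset P}
    (hC₁ : C₁ ∈ 𝓑) (hC₂ : C₂ ∈ 𝓑) (hne : C₁ ≠ C₂) : #(C₁ ∩ C₂) = lam := by
  have h := congrFun₂ (hD.transpose_mul_incidenceMatrix hsym) ⟨C₁, hC₁⟩ ⟨C₂, hC₂⟩
  rw [transpose_mul_incidenceMatrix_apply] at h
  simpa [hne] using h

theorem card_fixedPoints_eq (hD : IsDesign 𝓑 v k lam) (hsym : #𝓑 = v) (σ : Equiv.Perm P)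
    (hσ : ∀ C ∈ 𝓑, σ • C ∈ 𝓑) : #{x | σ x = x} = #{C ∈ 𝓑 | σ • C = C} := by
  obtain ⟨L, hLM, hML⟩ := hD.exists_inverse_incidenceMatrix hsym
  have h := trace_eq_of_mul_eq_mul hLM hML (permMatrix_mul_incidenceMatrix σ hσ)
  rw [Equiv.Perm.trace_permMatrix, Equiv.Perm.trace_permMatrix, card_filter_blockPerm_eq] at h
  exact_mod_cast h

end IsDesign

section FixedPoints

variable {α : Type*} [DecidableEq α]

def FixesAtMostOnBlock (M : Type*) [Group M] [MulAction M α] (B : Finset α) (t : ℕ) : Prop :=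
  ∀ g : M, g • B = B → ¬ (∀ a ∈ B, g • a = a) → #{a ∈ B | g • a = a} ≤ t

variable {M : Type*} [Group M] [MulAction M α]

theorem FixesAtMostOnBlock.mono {B : Finset α} {s t : ℕ} (H : FixesAtMostOnBlock M B s)
    (hst : s ≤ t) : FixesAtMostOnBlock M B t :=
  fun g hgB hg => (H g hgB hg).trans hst

theorem FixesAtMostOnBlock.smul {B : Finset α} {t : ℕ} (H : FixesAtMostOnBlock M B t) (h : M) :
    FixesAtMostOnBlock M (h • B) t := by
  intro g hgB hg
  have hfixed : ∀ a : α, (h⁻¹ * g * h) • a = a ↔ g • h • a = h • a := by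
    intro a
    rw [mul_smul, mul_smul, inv_smul_eq_iff]
  have hconjB : (h⁻¹ * g * h) • B = B := by
    rw [mul_smul, mul_smul, hgB, inv_smul_smul]
  have hconj : ¬ ∀ a ∈ B, (h⁻¹ * g * h) • a = a := by
    refine fun hall => hg fun c hc => ?_
    obtain ⟨a, ha, rfl⟩ := mem_smul_finset.mp hc
    exact (hfixed a).mp (hall a ha)
  have hfilter : {c ∈ h • B | g • c = c} = h • {a ∈ B | (h⁻¹ * g * h) • a = a} := by
    rw [← image_smul, filter_image, ← image_smul]
    simp only [hfixed]
  rw [hfilter, card_smul_finset]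
  exact H _ hconjB hconj

theorem filter_smul_eq_self_subset_inter (g : M) (C : Finset α) :
    {a ∈ C | g • a = a} ⊆ C ∩ g • C := by
  intro a ha
  obtain ⟨haC, hga⟩ := mem_filter.mp ha
  exact mem_inter.mpr ⟨haC, hga ▸ smul_mem_smul_finset haC⟩

end FixedPoints

theorem FixesAtMostOnBlock.of_isBlockTransitive {α : Type*} [DecidableEq α]
    {G : Subgroup (Equiv.Perm α)} {𝓑 : Finset (Finset α)} {B C : Finset α} {t : ℕ}
    (H : FixesAtMostOnBlock G B t) (hbt : IsBlockTransitive G 𝓑) (hB : B ∈ 𝓑) (hC : C ∈ 𝓑) :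
    FixesAtMostOnBlock G C t := by
  obtain ⟨h, hG, rfl⟩ := hbt B hB C hC
  exact H.smul ⟨h, hG⟩

section Automorphisms

variable {G : Subgroup (Equiv.Perm P)} {𝓑 : Finset (Finset P)} {v k lam : ℕ} {B : Finset P}

theorem FixesAtMostOnBlock.card_filter_le (H : FixesAtMostOnBlock G B lam)
    (hD : IsDesign 𝓑 v k lam) (hsym : #𝓑 = v) (hAut : IsAutGroup G 𝓑) (hB : B ∈ 𝓑) {g : G}
    (hg : ¬ ∀ a ∈ B, g • a = a) : #{a ∈ B | g • a = a} ≤ lam := by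
  by_cases hgB : g • B = B
  · exact H g hgB hg
  · calc #{a ∈ B | g • a = a} ≤ #(B ∩ g • B) := card_le_card (filter_smul_eq_self_subset_inter g B)
      _ = lam := hD.card_inter_eq hsym hB (hAut g g.2 B hB) (Ne.symm hgB)

namespace IsDesign

variable (hD : IsDesign 𝓑 v k lam) (hsym : #𝓑 = v) (hAut : IsAutGroup G 𝓑)
  (hbt : IsBlockTransitive G 𝓑) (hB : B ∈ 𝓑)
include hD hsym hAut hbt hB

theorem setOf_smul_eq_self_eq (H : FixesAtMostOnBlock G B lam) {g : G} (hg : g ≠ 1)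
    (hfix : ∀ a ∈ B, g • a = a) : {x : P | g • x = x} = B := by
  refine Set.Subset.antisymm (fun x hx => ?_) hfix
  by_contra hxB
  obtain ⟨z, hz⟩ : ∃ z : P, g • z ≠ z := by
    by_contra! h
    exact hg (Subtype.ext (Equiv.ext h))
  obtain ⟨C, hCx⟩ : {C ∈ 𝓑 | x ∈ C ∧ z ∈ C}.Nonempty := by
    rw [← card_pos, hD.pair_blocks x z (by rintro rfl; exact hz hx)]
    exact hD.lam_pos
  obtain ⟨hC, hxC, hzC⟩ := mem_filter.mp hCx
  have hsub : insert x (B ∩ C) ⊆ {a ∈ C | g • a = a} := by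
    intro a ha
    rcases mem_insert.mp ha with rfl | ha
    · exact mem_filter.mpr ⟨hxC, hx⟩
    · exact mem_filter.mpr ⟨(mem_inter.mp ha).2, hfix a (mem_inter.mp ha).1⟩
  have hcard : #(insert x (B ∩ C)) = lam + 1 := by
    rw [card_insert_of_notMem fun h => hxB (mem_inter.mp h).1,
      hD.card_inter_eq hsym hB hC (by rintro rfl; exact hxB hxC)]
  have hle := (H.of_isBlockTransitive hbt hB hC).card_filter_le hD hsym hAut hC
    (fun h => hz (h z hzC))
  have := card_le_card hsub
  omega

theorem eq_one_of_forall_mem_smul_eq_self (H : FixesAtMostOnBlock G B (lam - 1)) {g : G}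
    (hfix : ∀ a ∈ B, g • a = a) : g = 1 := by
  by_contra hg
  have hFix := hD.setOf_smul_eq_self_eq hsym hAut hbt hB (H.mono (Nat.sub_le lam 1)) hg hfix
  have hcount : #{C ∈ 𝓑 | (g : Equiv.Perm P) • C = C} = k := by
    rw [← hD.card_fixedPoints_eq hsym g (hAut g g.2), ← hD.blocks_card B hB]
    congr 1
    ext x
    simp only [mem_filter, mem_univ, true_and]
    exact Set.ext_iff.mp hFix x
  obtain ⟨C, hCfix, hCB⟩ := exists_mem_ne (by rw [hcount]; exact hD.two_lt_k.trans' one_lt_two) B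
  obtain ⟨hC, hgC⟩ := mem_filter.mp hCfix
  have hmoves : ¬ ∀ a ∈ C, g • a = a := fun h =>
    hCB (eq_of_subset_of_card_le (fun a ha => by rw [← mem_coe, ← hFix]; exact h a ha)
      (by rw [hD.blocks_card B hB, hD.blocks_card C hC]))
  have hle := H.of_isBlockTransitive hbt hB hC g hgC hmoves
  have hsub : B ∩ C ⊆ {a ∈ C | g • a = a} := fun a ha =>
    mem_filter.mpr ⟨(mem_inter.mp ha).2, hfix a (mem_inter.mp ha).1⟩
  have := card_le_card hsub
  rw [hD.card_inter_eq hsym hB hC hCB.symm] at this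
  have := hD.lam_pos
  omega

end IsDesign

end Automorphisms

theorem stmt_7_general (𝓑 : Finset (Finset P)) (v k lam : ℕ)
    (hD : IsDesign 𝓑 v k lam) (hsym : 𝓑.card = v)
    (G : Subgroup (Equiv.Perm P)) (hAut : IsAutGroup G 𝓑)
    (hbt : IsBlockTransitive G 𝓑)
    (B : Finset P) (hB : B ∈ 𝓑) :
    ((∀ g : G, g • B = B → ¬ (∀ a ∈ B, g • a = a) →
        (B.filter fun a => g • a = a).card ≤ lam) →
      ((∀ g : G, (∀ a ∈ B, g • a = a) → g = 1) ∨
        (∀ g : G, g ≠ 1 → (∀ a ∈ B, g • a = a) → {x : P | g • x = x} = (B : Set P)))) ∧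
    ((∀ g : G, g • B = B → ¬ (∀ a ∈ B, g • a = a) →
        (B.filter fun a => g • a = a).card ≤ lam - 1) →
      (∀ g : G, (∀ a ∈ B, g • a = a) → g = 1)) :=
  ⟨fun H => Or.inr fun _ hg hfix => hD.setOf_smul_eq_self_eq hsym hAut hbt hB H hg hfix,
    fun H _ hfix => hD.eq_one_of_forall_mem_smul_eq_self hsym hAut hbt hB H hfix⟩

/-- **Lemma 4.2.** Let `G` be a block-transitive automorphism group of a symmetric design
with `λ > 1` and let `B` be a block. If every element of `G_B` inducing a non-identity
permutation of `B` fixes at most `λ` points of `B`, then either `G_B` is faithful on `B`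
or every non-identity element of the pointwise stabilizer of `B` has fixed-point set
exactly `B`; if "at most `λ`" is strengthened to "at most `λ - 1`", then `G_B` is
faithful on `B`. -/
theorem stmt_7 (𝓑 : Finset (Finset P)) (v k lam : ℕ)
    (hD : IsDesign 𝓑 v k lam) (hsym : 𝓑.card = v) (hlam : 1 < lam)
    (G : Subgroup (Equiv.Perm P)) (hAut : IsAutGroup G 𝓑)
    (hbt : IsBlockTransitive G 𝓑)
    (B : Finset P) (hB : B ∈ 𝓑) :
    ((∀ g : G, g • B = B → ¬ (∀ a ∈ B, g • a = a) →
        (B.filter fun a => g • a = a).card ≤ lam) →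
      ((∀ g : G, (∀ a ∈ B, g • a = a) → g = 1) ∨
        (∀ g : G, g ≠ 1 → (∀ a ∈ B, g • a = a) → {x : P | g • x = x} = (B : Set P)))) ∧
    ((∀ g : G, g • B = B → ¬ (∀ a ∈ B, g • a = a) →
        (B.filter fun a => g • a = a).card ≤ lam - 1) →
      (∀ g : G, (∀ a ∈ B, g • a = a) → g = 1)) :=
  stmt_7_general 𝓑 v k lam hD hsym G hAut hbt B hB
end

section
/- Let D = (P,𝓑) be a symmetric 2-(v,k,λ) design with λ > 1 and let G be a flag-transitive automorphism group of D. If for a block B every element of G_B that induces a non-identity permutation of B fixes at most two points of B, then G_B acts faithfully on B (i.e., the pointwise stabilizer G_{(B)} is trivial). -/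
open scoped Pointwise

variable {P : Type*} [Fintype P] [DecidableEq P]

section Counting
variable {𝓑 : Finset (Finset P)} {v k lam : ℕ}

lemma repl_mul (hD : IsDesign 𝓑 v k lam) (p : P) :
    (𝓑.filter fun C => p ∈ C).card * (k - 1) = lam * (v - 1) := by
  have key : ∑ q ∈ Finset.univ.erase p, (𝓑.filter fun C => p ∈ C ∧ q ∈ C).card
      = (v - 1) * lam := by
    rw [Finset.sum_congr rfl (fun q hq => hD.pair_blocks p q (Ne.symm (Finset.ne_of_mem_erase hq)))]
    rw [Finset.sum_const, Finset.card_erase_of_mem (Finset.mem_univ p), Finset.card_univ,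
      hD.card_points, smul_eq_mul]
  have swap : ∑ q ∈ Finset.univ.erase p, (𝓑.filter fun C => p ∈ C ∧ q ∈ C).card
      = ∑ C ∈ 𝓑.filter (fun C => p ∈ C), (C.erase p).card := by
    simp only [Finset.card_filter]
    rw [Finset.sum_comm]
    rw [Finset.sum_filter]
    refine Finset.sum_congr rfl (fun C _ => ?_)
    by_cases hp : p ∈ C
    · simp only [hp, true_and, if_true]
      rw [← Finset.card_filter]
      congr 1
      ext q
      simp [Finset.mem_erase, and_comm]
    · simp [hp]
  have eval : ∑ C ∈ 𝓑.filter (fun C => p ∈ C), (C.erase p).card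
      = (𝓑.filter fun C => p ∈ C).card * (k - 1) := by
    rw [Finset.sum_congr rfl (fun C hC => ?_), Finset.sum_const, smul_eq_mul]
    rw [Finset.card_erase_of_mem (Finset.mem_filter.mp hC).2,
      hD.blocks_card C (Finset.mem_filter.mp hC).1]
  rw [swap, eval] at key
  rw [key, mul_comm]


lemma sum_repl (hD : IsDesign 𝓑 v k lam) (hsym : 𝓑.card = v) :
    ∑ p : P, (𝓑.filter fun C => p ∈ C).card = v * k := by
  simp only [Finset.card_filter]
  rw [Finset.sum_comm]
  have : ∀ C ∈ 𝓑, (∑ p : P, if p ∈ C then 1 else 0) = k := by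
    intro C hC
    rw [← Finset.card_filter, Finset.filter_mem_eq_inter, Finset.univ_inter, hD.blocks_card C hC]
  rw [Finset.sum_congr rfl this, Finset.sum_const, smul_eq_mul, hsym]

lemma lam_eq (hD : IsDesign 𝓑 v k lam) (hsym : 𝓑.card = v) :
    lam * (v - 1) = k * (k - 1) := by
  have hk2 := hD.two_lt_k
  have hkv := hD.k_lt_v
  have hv : 0 < v := by omega
  have h1 : v * k * (k-1) = v * (lam * (v-1)) := by
    rw [← sum_repl hD hsym, Finset.sum_mul,
      Finset.sum_congr rfl (fun p _ => repl_mul hD p), Finset.sum_const, smul_eq_mul,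
      Finset.card_univ, hD.card_points]
  have := Nat.eq_of_mul_eq_mul_left hv (by linarith [h1] : v * (k * (k-1)) = v * (lam * (v-1)))
  omega

lemma repl_eq (hD : IsDesign 𝓑 v k lam) (hsym : 𝓑.card = v) (p : P) :
    (𝓑.filter fun C => p ∈ C).card = k := by
  have h := repl_mul hD p
  rw [lam_eq hD hsym] at h
  have hk : 0 < k - 1 := by have := hD.two_lt_k; omega
  exact Nat.eq_of_mul_eq_mul_right hk h


lemma erase_filter_card (hD : IsDesign 𝓑 v k lam) (hsym : 𝓑.card = v)
    {B₁ : Finset P} (h1 : B₁ ∈ 𝓑) {p : P} (hp : p ∈ B₁) :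
    ((𝓑.erase B₁).filter fun C => p ∈ C).card = k - 1 := by
  have : (𝓑.erase B₁).filter (fun C => p ∈ C) = (𝓑.filter fun C => p ∈ C).erase B₁ := by
    ext C; simp only [Finset.mem_erase, Finset.mem_filter]; tauto
  rw [this, Finset.card_erase_of_mem (Finset.mem_filter.mpr ⟨h1, hp⟩), repl_eq hD hsym p]

lemma erase_pair_filter_card (hD : IsDesign 𝓑 v k lam)
    {B₁ : Finset P} (h1 : B₁ ∈ 𝓑) {p q : P} (hp : p ∈ B₁) (hq : q ∈ B₁) (hne : p ≠ q) :
    ((𝓑.erase B₁).filter fun C => p ∈ C ∧ q ∈ C).card = lam - 1 := by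
  have : (𝓑.erase B₁).filter (fun C => p ∈ C ∧ q ∈ C)
      = (𝓑.filter fun C => p ∈ C ∧ q ∈ C).erase B₁ := by
    ext C; simp only [Finset.mem_erase, Finset.mem_filter]; tauto
  rw [this, Finset.card_erase_of_mem (Finset.mem_filter.mpr ⟨h1, hp, hq⟩), hD.pair_blocks p q hne]

lemma inter_sum (hD : IsDesign 𝓑 v k lam) (hsym : 𝓑.card = v)
    {B₁ : Finset P} (h1 : B₁ ∈ 𝓑) :
    ∑ C ∈ 𝓑.erase B₁, (B₁ ∩ C).card = k * (k - 1) := by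
  have : ∀ C, (B₁ ∩ C).card = ∑ p ∈ B₁, if p ∈ C then 1 else 0 := by
    intro C; rw [← Finset.card_filter, Finset.filter_mem_eq_inter]
  rw [Finset.sum_congr rfl (fun C _ => this C), Finset.sum_comm]
  have : ∀ p ∈ B₁, (∑ C ∈ 𝓑.erase B₁, if p ∈ C then 1 else 0) = k - 1 := by
    intro p hp
    rw [← Finset.card_filter]
    exact erase_filter_card hD hsym h1 hp
  rw [Finset.sum_congr rfl this, Finset.sum_const, smul_eq_mul, hD.blocks_card B₁ h1]

lemma inter_sq_sum (hD : IsDesign 𝓑 v k lam) (hsym : 𝓑.card = v)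
    {B₁ : Finset P} (h1 : B₁ ∈ 𝓑) :
    ∑ C ∈ 𝓑.erase B₁, (B₁ ∩ C).card * (B₁ ∩ C).card = k * ((k - 1) * lam) := by
  have hx : ∀ C, (B₁ ∩ C).card = ∑ p ∈ B₁, if p ∈ C then 1 else 0 := by
    intro C; rw [← Finset.card_filter, Finset.filter_mem_eq_inter]
  have expand : ∀ C, (B₁ ∩ C).card * (B₁ ∩ C).card
      = ∑ p ∈ B₁, ∑ q ∈ B₁, if p ∈ C ∧ q ∈ C then 1 else 0 := by
    intro C
    rw [hx C, Finset.sum_mul_sum]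
    refine Finset.sum_congr rfl (fun p _ => Finset.sum_congr rfl (fun q _ => ?_))
    split_ifs with h h2 h3 <;> simp_all
  rw [Finset.sum_congr rfl (fun C _ => expand C), Finset.sum_comm]
  have inner : ∀ p ∈ B₁, (∑ C ∈ 𝓑.erase B₁, ∑ q ∈ B₁, if p ∈ C ∧ q ∈ C then 1 else 0)
      = (k - 1) * lam := by
    intro p hp
    rw [Finset.sum_comm]
    have vals : ∀ q ∈ B₁, (∑ C ∈ 𝓑.erase B₁, if p ∈ C ∧ q ∈ C then 1 else 0)
        = if q = p then k - 1 else lam - 1 := by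
      intro q hq
      rw [← Finset.card_filter]
      by_cases h : q = p
      · subst h
        simp only [if_true, and_self]
        exact erase_filter_card hD hsym h1 hq
      · rw [if_neg h]
        exact erase_pair_filter_card hD h1 hp hq (fun e => h e.symm)
    rw [Finset.sum_congr rfl vals, ← Finset.add_sum_erase _ _ hp, if_pos rfl]
    have e1 : ∀ x ∈ B₁.erase p, (if x = p then k - 1 else lam - 1) = lam - 1 :=
      fun x hx => if_neg (Finset.mem_erase.mp hx).1
    rw [Finset.sum_congr rfl e1, Finset.sum_const, smul_eq_mul,
      Finset.card_erase_of_mem hp, hD.blocks_card B₁ h1]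
    have hl := hD.lam_pos
    conv_rhs => rw [show lam = 1 + (lam - 1) by omega]
    rw [Nat.mul_add, Nat.mul_one]
  rw [Finset.sum_congr rfl inner, Finset.sum_const, smul_eq_mul, hD.blocks_card B₁ h1]


lemma inter_card (hD : IsDesign 𝓑 v k lam) (hsym : 𝓑.card = v)
    {B₁ B₂ : Finset P} (h1 : B₁ ∈ 𝓑) (h2 : B₂ ∈ 𝓑) (hne : B₂ ≠ B₁) :
    (B₁ ∩ B₂).card = lam := by
  have hn : (𝓑.erase B₁).card = v - 1 := by rw [Finset.card_erase_of_mem h1, hsym]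
  have hc : (lam : ℤ) * ((v - 1 : ℕ) : ℤ) = ((k * (k - 1) : ℕ) : ℤ) := by
    exact_mod_cast congrArg (Nat.cast : ℕ → ℤ) (lam_eq hD hsym)
  have c1 : (∑ C ∈ 𝓑.erase B₁, ((B₁ ∩ C).card : ℤ)) = ((k * (k - 1) : ℕ) : ℤ) := by
    exact_mod_cast congrArg (Nat.cast : ℕ → ℤ) (inter_sum hD hsym h1)
  have c2 : (∑ C ∈ 𝓑.erase B₁, ((B₁ ∩ C).card : ℤ) * ((B₁ ∩ C).card : ℤ))
      = ((k * (k - 1) : ℕ) : ℤ) * (lam : ℤ) := by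
    have := congrArg (Nat.cast : ℕ → ℤ) (inter_sq_sum hD hsym h1)
    push_cast at this ⊢
    rw [this]; ring
  have hz : (∑ C ∈ 𝓑.erase B₁, (((B₁ ∩ C).card : ℤ) - lam) ^ 2) = 0 := by
    have expand : ∀ C ∈ 𝓑.erase B₁, (((B₁ ∩ C).card : ℤ) - lam) ^ 2
        = ((B₁ ∩ C).card : ℤ) * ((B₁ ∩ C).card : ℤ)
          - 2 * lam * ((B₁ ∩ C).card : ℤ) + lam * lam := fun C _ => by ring
    rw [Finset.sum_congr rfl expand, Finset.sum_add_distrib, Finset.sum_sub_distrib,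
      ← Finset.mul_sum, Finset.sum_const, hn, c1, c2, nsmul_eq_mul]
    linear_combination (lam : ℤ) * hc
  have each := (Finset.sum_eq_zero_iff_of_nonneg (fun C _ => sq_nonneg _)).mp hz B₂
    (Finset.mem_erase.mpr ⟨hne, h2⟩)
  have : ((B₁ ∩ B₂).card : ℤ) = lam := by
    have := pow_eq_zero_iff (n := 2) (by norm_num) |>.mp each
    linarith [this]
  exact_mod_cast this

end Counting

/-- **Lemma 4.3.** Let `G` be a flag-transitive automorphism group of a symmetric design
with `λ > 1`. If every element of `G_B` inducing a non-identity permutation of the block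
`B` fixes at most two points of `B`, then `G_B` acts faithfully on `B`. -/
theorem stmt_8 (𝓑 : Finset (Finset P)) (v k lam : ℕ)
    (hD : IsDesign 𝓑 v k lam) (hsym : 𝓑.card = v) (hlam : 1 < lam)
    (G : Subgroup (Equiv.Perm P)) (hAut : IsAutGroup G 𝓑)
    (hflag : IsFlagTransitive G 𝓑)
    (B : Finset P) (hB : B ∈ 𝓑)
    (hfix : ∀ g : G, g • B = B → ¬ (∀ a ∈ B, g • a = a) →
      (B.filter fun a => g • a = a).card ≤ 2) :
    ∀ g : G, (∀ a ∈ B, g • a = a) → g = 1 := by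
  intro g hg
  by_contra hg1
  set g' : Equiv.Perm P := (g : Equiv.Perm P) with hg'def
  have hgfix : ∀ a ∈ B, g' a = a := fun a ha => hg a ha
  have hk2 := hD.two_lt_k
  obtain ⟨x, hx⟩ : ∃ x : P, g' x ≠ x := by
    by_contra h
    push_neg at h
    exact hg1 (Subtype.ext (Equiv.ext h))
  have hxB : x ∉ B := fun h => hx (hgfix x h)
  have hgB : g' • B = B := by
    ext y
    rw [Finset.mem_smul_finset]
    constructor
    · rintro ⟨z, hz, rfl⟩
      rw [show g' • z = g' z from rfl, hgfix z hz]; exact hz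
    · exact fun hy => ⟨y, hy, hgfix y hy⟩
  have hgxB : g' x ∉ B := by
    intro h
    exact hx (g'.injective (hgfix (g' x) h))
  have hxgx : x ≠ g' x := fun h => hx h.symm
  -- a block through x and g' x
  have hpair := hD.pair_blocks x (g' x) hxgx
  obtain ⟨D, hDmem⟩ : ∃ D, D ∈ 𝓑.filter fun C => x ∈ C ∧ g' x ∈ C := by
    apply Finset.card_pos.mp
    rw [hpair]; omega
  rw [Finset.mem_filter] at hDmem
  obtain ⟨hD𝓑, hxD, hgxD⟩ := hDmem
  have hDB : D ≠ B := fun h => hxB (h ▸ hxD)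
  -- D is g-invariant
  have hgD : g' • D = D := by
    by_contra hDD
    have hgD𝓑 : g' • D ∈ 𝓑 := hAut g' g.2 D hD𝓑
    have hsub : D ∩ B ⊆ D ∩ (g' • D) := by
      intro p hp
      rw [Finset.mem_inter] at hp ⊢
      refine ⟨hp.1, ?_⟩
      have : g' • p ∈ g' • D := Finset.smul_mem_smul_finset hp.1
      rwa [show g' • p = g' p from rfl, hgfix p hp.2] at this
    have hc1 : (D ∩ B).card = lam := inter_card hD hsym hD𝓑 hB (Ne.symm hDB)
    have hc2 : (D ∩ (g' • D)).card = lam :=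
      inter_card hD hsym hD𝓑 hgD𝓑 (fun h => hDD h)
    have heq : D ∩ B = D ∩ (g' • D) :=
      Finset.eq_of_subset_of_card_le hsub (by rw [hc1, hc2])
    have : g' x ∈ D ∩ (g' • D) := by
      rw [Finset.mem_inter]
      exact ⟨hgxD, by simpa using Finset.smul_mem_smul_finset (a := g') hxD⟩
    rw [← heq, Finset.mem_inter] at this
    exact hgxB this.2
  -- lam = 2 via conjugation and hfix
  have hBne : ∃ b, b ∈ B := Finset.card_pos.mp (by rw [hD.blocks_card B hB]; omega) |>.imp (fun b h => h)
  obtain ⟨b₀, hb₀⟩ := hBne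
  obtain ⟨h, hhG, hh1, hh2⟩ := hflag D hD𝓑 B hB x hxD b₀ hb₀
  have hinv : h⁻¹ • B = D := by rw [← hh2, inv_smul_smul]
  set t : Equiv.Perm P := h * g' * h⁻¹ with htdef
  have htG : t ∈ G := G.mul_mem (G.mul_mem hhG g.2) (G.inv_mem hhG)
  have htB : (⟨t, htG⟩ : G) • B = B := by
    show t • B = B
    rw [htdef, mul_smul, mul_smul, hinv, hgD, hh2]
  have hhxB : h • x ∈ B := by
    rw [← hh2]; exact Finset.smul_mem_smul_finset hxD
  have htmove : ¬ (∀ a ∈ B, (⟨t, htG⟩ : G) • a = a) := by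
    intro hall
    have := hall (h • x) hhxB
    have : t • (h • x) = h • x := this
    rw [htdef] at this
    simp only [mul_smul, inv_smul_smul] at this
    exact hx (h.injective this)
  have hle := hfix ⟨t, htG⟩ htB htmove
  have himg : (D ∩ B).image (fun c => h • c) ⊆ B.filter (fun a => (⟨t, htG⟩ : G) • a = a) := by
    intro y hy
    rw [Finset.mem_image] at hy
    obtain ⟨c, hc, rfl⟩ := hy
    rw [Finset.mem_inter] at hc
    rw [Finset.mem_filter]
    constructor
    · rw [← hh2]; exact Finset.smul_mem_smul_finset hc.1
    · show t • (h • c) = h • c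
      rw [htdef]
      simp only [mul_smul, inv_smul_smul]
      rw [show g' • c = g' c from rfl, hgfix c hc.2]
  have hDBcard : (D ∩ B).card = lam := inter_card hD hsym hD𝓑 hB (Ne.symm hDB)
  have hlam2 : lam = 2 := by
    have h1 : ((D ∩ B).image (fun c => h • c)).card = lam := by
      rw [Finset.card_image_of_injective _ (MulAction.injective h), hDBcard]
    have := Finset.card_le_card himg
    omega
  -- every block is g-invariant
  have hfixall : ∀ C ∈ 𝓑, g' • C = C := by
    intro C hC
    by_cases hCB : C = B
    · rw [hCB]; exact hgB
    · have hCBcard : (C ∩ B).card = 2 := by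
        rw [inter_card hD hsym hC hB (fun h => hCB h.symm), hlam2]
      obtain ⟨a, b, hab, habeq⟩ := Finset.card_eq_two.mp hCBcard
      have haC : a ∈ C ∧ a ∈ B := by
        have : a ∈ C ∩ B := habeq ▸ Finset.mem_insert_self a {b}
        exact Finset.mem_inter.mp this
      have hbC : b ∈ C ∧ b ∈ B := by
        have : b ∈ C ∩ B := habeq ▸ Finset.mem_insert_of_mem (Finset.mem_singleton_self b)
        exact Finset.mem_inter.mp this
      have hpf : ({B, C} : Finset (Finset P)) = 𝓑.filter fun E => a ∈ E ∧ b ∈ E := by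
        apply Finset.eq_of_subset_of_card_le
        · intro E hE
          rw [Finset.mem_insert, Finset.mem_singleton] at hE
          rw [Finset.mem_filter]
          rcases hE with rfl | rfl
          · exact ⟨hB, haC.2, hbC.2⟩
          · exact ⟨hC, haC.1, hbC.1⟩
        · rw [hD.pair_blocks a b hab, hlam2, Finset.card_pair (fun h => hCB h.symm)]
      have hgC𝓑 : g' • C ∈ 𝓑 := hAut g' g.2 C hC
      have hgCpf : g' • C ∈ ({B, C} : Finset (Finset P)) := by
        rw [hpf, Finset.mem_filter]
        refine ⟨hgC𝓑, ?_, ?_⟩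
        · have := Finset.smul_mem_smul_finset (a := g') haC.1
          rwa [show g' • a = g' a from rfl, hgfix a haC.2] at this
        · have := Finset.smul_mem_smul_finset (a := g') hbC.1
          rwa [show g' • b = g' b from rfl, hgfix b hbC.2] at this
      rw [Finset.mem_insert, Finset.mem_singleton] at hgCpf
      rcases hgCpf with hE | hE
      · exfalso
        apply hCB
        have : C = g'⁻¹ • B := by rw [← hE, inv_smul_smul]
        rw [← hgB, inv_smul_smul] at this
        exact this
      · exact hE
  -- final contradiction
  have hsubf : 𝓑.filter (fun C => x ∈ C) ⊆ 𝓑.filter fun C => x ∈ C ∧ g' x ∈ C := by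
    intro C hC
    rw [Finset.mem_filter] at hC ⊢
    refine ⟨hC.1, hC.2, ?_⟩
    have := Finset.smul_mem_smul_finset (a := g') hC.2
    rwa [hfixall C hC.1] at this
  have := Finset.card_le_card hsubf
  rw [repl_eq hD hsym x, hpair, hlam2] at this
  omega
end
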